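/- Let r_i be an uncovered request with at least two children, and let j,k ∈ suns(i) with k<j. Then t_j−ρ(j) ≥ t_k+4·ρ(k). -/

import Mathlib

open Finset

/-- A replica is a pair `(v, t)` of a network node and a time. -/
abbrev Replica : Type := ℕ × ℕ

/-- A (directed) grid edge is a pair of replicas. -/
abbrev GEdge : Type := Replica × Replica

/-- Horizontal directed edge `((v,t),(v+1,t))`. -/
def isHoriz (e : GEdge) : Prop := e.2 = (e.1.1 + 1, e.1.2)

/-- Vertical arc `((v,t),(v,t+1))`. -/
def isArc (e : GEdge) : Prop := e.2 = (e.1.1, e.1.2 + 1)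

def isGridEdge (e : GEdge) : Prop := isHoriz e ∨ isArc e

/-- The quarter ball `B(r,ρ)`: replicas `(u,s)` with `u ≤ v`, `s ≤ t` and
`(v−u)+(t−s) ≤ ρ`. -/
def qball (r : Replica) (ρ : ℕ) : Set Replica :=
  {q | q.1 ≤ r.1 ∧ q.2 ≤ r.2 ∧ (r.1 - q.1) + (r.2 - q.2) ≤ ρ}

/-- Grid edges with both endpoints in the quarter ball `B(r,ρ)`. -/
def ballEdge (r : Replica) (ρ : ℕ) (e : GEdge) : Prop :=
  isGridEdge e ∧ e.1 ∈ qball r ρ ∧ e.2 ∈ qball r ρ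

/-- Two quarter balls are edge-disjoint if they share no grid edge. -/
def BallsEdgeDisjoint (r : Replica) (ρ : ℕ) (r' : Replica) (ρ' : ℕ) : Prop :=
  ∀ e : GEdge, ¬ (ballEdge r ρ e ∧ ballEdge r' ρ' e)

/-- The square `Sq(r,ρ) = [v−ρ,v] × [t−ρ,t]`. -/
def SqRect (r : Replica) (ρ : ℕ) : Set Replica :=
  {q | r.1 - ρ ≤ q.1 ∧ q.1 ≤ r.1 ∧ r.2 - ρ ≤ q.2 ∧ q.2 ≤ r.2}

/-- Directed `L∞` distance `d∞(q,r)`: `max(v−u, t−s)` if `u ≤ v` and `s ≤ t`,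
and `∞` otherwise. -/
def distInf (q r : Replica) : ℕ∞ :=
  if q.1 ≤ r.1 ∧ q.2 ≤ r.2 then ((max (r.1 - q.1) (r.2 - q.2) : ℕ) : ℕ∞) else ⊤

/-- The replicas of an edge set: `(0,0)` together with all endpoints of its edges. -/
def Repl (F : Finset GEdge) : Set Replica :=
  insert ((0, 0) : Replica) {q | ∃ e ∈ F, q = e.1 ∨ q = e.2}

/-- The arcs of the vertical path at node `u` from time `s` to time `τ`. -/
def vertPath (u s τ : ℕ) : Finset GEdge :=
  (Finset.range (τ - s)).image (fun k => ((u, s + k), (u, s + k + 1)))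

/-- The horizontal edges of the path at time `τ` from node `u` to node `w`. -/
def horizPath (τ u w : ℕ) : Finset GEdge :=
  (Finset.range (w - u)).image (fun k => ((u + k, τ), (u + k + 1, τ)))

/-- A directed path from `a` to `b` all of whose edges belong to `F`. -/
def PathIn (F : Finset GEdge) (a b : Replica) : Prop :=
  ∃ (L : ℕ) (f : ℕ → Replica), f 0 = a ∧ f L = b ∧ ∀ k < L, (f k, f (k + 1)) ∈ F

/-- An execution of Algorithm `Square` on a request sequence
`r_1 = (v 1, t 1), …, r_N = (v N, t N)` (with `t 0 = 0` and nondecreasing times).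
`sol i` is the edge set after handling request `i`; `ρ i` is the radius of
request `i`; `(u' i, s' i)` is its closest replica and `(us i, ss i)` its
serving replica.  The fields record the specification SQ1–SQ5. -/
structure SquareRun where
  N : ℕ
  v : ℕ → ℕ
  t : ℕ → ℕ
  ρ : ℕ → ℕ
  u' : ℕ → ℕ
  s' : ℕ → ℕ
  us : ℕ → ℕ
  ss : ℕ → ℕ
  sol : ℕ → Finset GEdge
  t_zero : t 0 = 0
  t_mono : ∀ i j, i ≤ j → j ≤ N → t i ≤ t j
  sol_zero : sol 0 = ∅
  /-- SQ2: `ρ i` is a lower bound on the distance from every replica of the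
  current solution (after the SQ1 additions) to `r_i`. -/
  rho_min : ∀ i, 1 ≤ i → i ≤ N →
    ∀ q ∈ Repl (sol (i - 1) ∪ vertPath 0 (t (i - 1)) (t i)),
      (ρ i : ℕ∞) ≤ distInf q (v i, t i)
  /-- SQ2: the closest replica belongs to the current solution. -/
  closest_mem : ∀ i, 1 ≤ i → i ≤ N →
    (u' i, s' i) ∈ Repl (sol (i - 1) ∪ vertPath 0 (t (i - 1)) (t i))
  /-- SQ2: the closest replica attains the radius. -/
  closest_dist : ∀ i, 1 ≤ i → i ≤ N →
    distInf (u' i, s' i) (v i, t i) = (ρ i : ℕ∞)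
  /-- SQ2: among replicas of node `u' i`, the closest replica is the latest. -/
  closest_late : ∀ i, 1 ≤ i → i ≤ N → ∀ s, s ≤ t i →
    (u' i, s) ∈ Repl (sol (i - 1) ∪ vertPath 0 (t (i - 1)) (t i)) → s ≤ s' i
  /-- SQ3: the serving replica is in the current solution and in `Sq(r_i, 5ρ i)`. -/
  serv_mem : ∀ i, 1 ≤ i → i ≤ N →
    (us i, ss i) ∈ Repl (sol (i - 1) ∪ vertPath 0 (t (i - 1)) (t i)) ∧
      (us i, ss i) ∈ SqRect (v i, t i) (5 * ρ i)
  /-- SQ3: the serving node is leftmost. -/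
  serv_min : ∀ i, 1 ≤ i → i ≤ N →
    ∀ q ∈ Repl (sol (i - 1) ∪ vertPath 0 (t (i - 1)) (t i)),
      q ∈ SqRect (v i, t i) (5 * ρ i) → us i ≤ q.1
  /-- SQ3: among those, the serving time is latest. -/
  serv_late : ∀ i, 1 ≤ i → i ≤ N →
    ∀ q ∈ Repl (sol (i - 1) ∪ vertPath 0 (t (i - 1)) (t i)),
      q ∈ SqRect (v i, t i) (5 * ρ i) → q.1 = us i → q.2 ≤ ss i
  /-- SQ1 + SQ4 + SQ5: the edges added while handling request `i`. -/
  step : ∀ i, 1 ≤ i → i ≤ N →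
    sol i = (sol (i - 1) ∪ vertPath 0 (t (i - 1)) (t i))
      ∪ vertPath (us i) (ss i) (t i) ∪ horizPath (t i) (us i) (v i)
      ∪ vertPath (us i) (t i) (t i + 4 * ρ i)

namespace SquareRun

variable (S : SquareRun)

/-- The `i`-th request replica. -/
def req (i : ℕ) : Replica := (S.v i, S.t i)

/-- The edges added in steps SQ4 and SQ5 while handling request `i`. -/
def added45 (i : ℕ) : Finset GEdge :=
  vertPath (S.us i) (S.ss i) (S.t i) ∪ horizPath (S.t i) (S.us i) (S.v i)
    ∪ vertPath (S.us i) (S.t i) (S.t i + 4 * S.ρ i)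

/-- Request `i` is covered if `v_i − u^s_i ≥ ρ(i)`. -/
def covered (i : ℕ) : Prop := S.ρ i ≤ S.v i - S.us i

def uncovered (i : ℕ) : Prop := ¬ S.covered i

/-- A feasible solution of the DMCD instance given by the requests of `S`. -/
def Feasible (F : Finset GEdge) : Prop :=
  (∀ e ∈ F, isGridEdge e) ∧
  (∀ i, 1 ≤ i → i ≤ S.N → PathIn F (0, 0) (S.req i)) ∧
  (∀ τ, τ < S.t S.N → ∃ w, ((w, τ), (w, τ + 1)) ∈ F)

/-- `S.IsParent i j` means `parent(j) = i`:  `i` is the least index greater than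
`j` such that `r_i` is uncovered and `SQball(j)`, `SQball(i)` are not
edge-disjoint. -/
def IsParent (i j : ℕ) : Prop :=
  1 ≤ j ∧ j < i ∧ i ≤ S.N ∧ S.uncovered j ∧ S.uncovered i ∧
    ¬ BallsEdgeDisjoint (S.req j) (S.ρ j) (S.req i) (S.ρ i) ∧
    ∀ k, j < k → k < i → S.uncovered k →
      BallsEdgeDisjoint (S.req j) (S.ρ j) (S.req k) (S.ρ k)

/-- A root: an uncovered request with no parent. -/
def IsRoot (i : ℕ) : Prop :=
  1 ≤ i ∧ i ≤ S.N ∧ S.uncovered i ∧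
    ∀ j, i < j → j ≤ S.N → S.uncovered j →
      BallsEdgeDisjoint (S.req i) (S.ρ i) (S.req j) (S.ρ j)

/-- `i ∈ Tree(iStar)`: one can go from `i` to `iStar` by repeatedly passing from
a child to its parent. -/
def InTree (i iStar : ℕ) : Prop :=
  Relation.ReflTransGen (fun a b => S.IsParent b a) i iStar

end SquareRun

/-!
Both siblings' quarter balls meet `SQball(i)`, so `r_i` lies less than `ρ(j)` (resp. `ρ(k)`) to the
left of `r_j` (resp. `r_k`), while the minimality of `ρ(i)` puts the serving nodes `us j`, `us k`
strictly right of `v i`. If `us k ≤ v j`, the SQ5 column of `k` is a replica horizontally within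
`ρ(j)` of `r_j`, so the minimality of `ρ(j)` forces `t_j ≥ t_k + 4ρ(k) + ρ(j)`. Otherwise the
edge-disjointness of `SQball(k)` and `SQball(j)` gives `t_j ≥ t_k + ρ(j)`, so the closest replica of
`r_j` lies in the strip `(v i, v j]` at a time `≥ t_k`; if the gap were smaller than claimed, an
induction along the run shows that no request before `j` can have created a replica there.
-/

lemma mem_repl {F : Finset GEdge} {q : Replica} :
    q ∈ Repl F ↔ q = (0, 0) ∨ ∃ e ∈ F, q = e.1 ∨ q = e.2 :=
  Set.mem_insert_iff

lemma repl_mono {F G : Finset GEdge} (h : F ⊆ G) : Repl F ⊆ Repl G := by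
  intro q hq
  rcases mem_repl.mp hq with rfl | ⟨e, he, hq⟩
  exacts [mem_repl.mpr (Or.inl rfl), mem_repl.mpr (Or.inr ⟨e, h he, hq⟩)]

lemma repl_union (F G : Finset GEdge) : Repl (F ∪ G) = Repl F ∪ Repl G := by
  ext q
  simp only [Set.mem_union, mem_repl, Finset.mem_union]
  grind

lemma mem_repl_vertPath {u a b : ℕ} {q : Replica} :
    q ∈ Repl (vertPath u a b) ↔ q = (0, 0) ∨ (a < b ∧ q.1 = u ∧ a ≤ q.2 ∧ q.2 ≤ b) := by
  simp only [mem_repl, vertPath, Finset.mem_image, Finset.mem_range]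
  constructor
  · rintro (rfl | ⟨_, ⟨r, hr, rfl⟩, rfl | rfl⟩)
    · exact Or.inl rfl
    all_goals exact Or.inr ⟨by omega, rfl, by simp only; omega, by simp only; omega⟩
  · rintro (rfl | ⟨hab, rfl, ha, hb⟩)
    · exact Or.inl rfl
    refine Or.inr ?_
    rcases hb.lt_or_eq with hb | hb
    · exact ⟨_, ⟨q.2 - a, by omega, rfl⟩, Or.inl (by ext <;> simp only; omega)⟩
    · exact ⟨_, ⟨q.2 - a - 1, by omega, rfl⟩, Or.inr (by ext <;> simp only; omega)⟩

lemma mem_repl_horizPath {τ u w : ℕ} {q : Replica} :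
    q ∈ Repl (horizPath τ u w) ↔ q = (0, 0) ∨ (u < w ∧ q.2 = τ ∧ u ≤ q.1 ∧ q.1 ≤ w) := by
  simp only [mem_repl, horizPath, Finset.mem_image, Finset.mem_range]
  constructor
  · rintro (rfl | ⟨_, ⟨r, hr, rfl⟩, rfl | rfl⟩)
    · exact Or.inl rfl
    all_goals exact Or.inr ⟨by omega, rfl, by simp only; omega, by simp only; omega⟩
  · rintro (rfl | ⟨huw, rfl, hu, hw⟩)
    · exact Or.inl rfl
    refine Or.inr ?_
    rcases hw.lt_or_eq with hw | hw
    · exact ⟨_, ⟨q.1 - u, by omega, rfl⟩, Or.inl (by ext <;> simp only; omega)⟩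
    · exact ⟨_, ⟨q.1 - u - 1, by omega, rfl⟩, Or.inr (by ext <;> simp only; omega)⟩

lemma coe_le_distInf_iff {q r : Replica} {d : ℕ} :
    (d : ℕ∞) ≤ distInf q r ↔ (q.1 ≤ r.1 → q.2 ≤ r.2 → d ≤ max (r.1 - q.1) (r.2 - q.2)) := by
  unfold distInf
  split_ifs with h
  · simp [h.1, h.2]
  · simp only [le_top, true_iff]
    intro h1 h2
    exact absurd ⟨h1, h2⟩ h

lemma distInf_eq_coe_iff {q r : Replica} {d : ℕ} :
    distInf q r = d ↔ q.1 ≤ r.1 ∧ q.2 ≤ r.2 ∧ max (r.1 - q.1) (r.2 - q.2) = d := by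
  unfold distInf
  split_ifs with h
  · simp [h.1, h.2]
  · simp only [ENat.top_ne_natCast, false_iff]
    exact fun h' => h ⟨h'.1, h'.2.1⟩

lemma sub_add_sub_lt_of_not_ballsEdgeDisjoint {r r' : Replica} {ρ ρ' : ℕ}
    (h : ¬ BallsEdgeDisjoint r ρ r' ρ') :
    (r.1 - r'.1) + (r.2 - r'.2) < ρ ∧ (r'.1 - r.1) + (r'.2 - r.2) < ρ' := by
  simp only [BallsEdgeDisjoint, not_forall, not_not] at h
  obtain ⟨⟨⟨a, b⟩, c, d⟩, ⟨hg, ha, hc⟩, ⟨-, ha', hc'⟩⟩ := h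
  simp only [qball, Set.mem_ofPred_eq] at ha hc ha' hc'
  rcases hg with hg | hg <;> simp only [isHoriz, isArc, Prod.mk.injEq] at hg <;> omega

lemma not_ballsEdgeDisjoint_of_mem_qball {r r' : Replica} {ρ ρ' x y : ℕ}
    (hx : x + 1 ≤ r.1) (hx' : x + 1 ≤ r'.1) (h : (x, y) ∈ qball r ρ) (h' : (x, y) ∈ qball r' ρ') :
    ¬ BallsEdgeDisjoint r ρ r' ρ' := by
  simp only [qball, Set.mem_ofPred_eq] at h h'
  refine fun hd => hd ((x, y), (x + 1, y)) ⟨⟨Or.inl rfl, ?_, ?_⟩, Or.inl rfl, ?_, ?_⟩ <;>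
    simp only [qball, Set.mem_ofPred_eq] <;> omega

lemma add_le_of_ballsEdgeDisjoint {a b a' b' ρ ρ' : ℕ} (h : BallsEdgeDisjoint (a, b) ρ (a', b') ρ')
    (ha' : 1 ≤ a') (ha : a' ≤ a) (hρ : a - a' < ρ) (hb : b ≤ b') : b + ρ' ≤ b' := by
  by_contra! hlt
  refine not_ballsEdgeDisjoint_of_mem_qball (x := a' - 1) (y := b) ?_ ?_ ?_ ?_ h <;>
    simp only [qball, Set.mem_ofPred_eq] <;> omega

namespace SquareRun

variable (S : SquareRun) {m n : ℕ}

/-- The replicas available when request `n` is handled, i.e. after step SQ1. -/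
def curRepl (n : ℕ) : Set Replica :=
  Repl (S.sol (n - 1) ∪ vertPath 0 (S.t (n - 1)) (S.t n))

lemma sol_mono (hmn : m ≤ n) (hn : n ≤ S.N) : S.sol m ⊆ S.sol n := by
  induction n, hmn using Nat.le_induction with
  | base => exact subset_rfl
  | succ n _ ih =>
    refine (ih (by omega)).trans ?_
    rw [S.step (n + 1) (by omega) hn]
    intro e he
    simp [he]

lemma repl_sol_subset_curRepl (hmn : m < n) (hn : n ≤ S.N) :
    Repl (S.sol m) ⊆ S.curRepl n :=
  repl_mono ((S.sol_mono (Nat.le_sub_one_of_lt hmn) (by omega)).trans Finset.subset_union_left)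

lemma curRepl_subset_repl_sol (h1 : 1 ≤ n) (hn : n ≤ S.N) : S.curRepl n ⊆ Repl (S.sol n) := by
  rw [curRepl, S.step n h1 hn]
  exact repl_mono (fun e he => by simp only [Finset.mem_union] at he ⊢; tauto)

lemma mem_repl_sol_pred {q : Replica} (hq : q ∈ S.curRepl n) (hq1 : 0 < q.1) :
    q ∈ Repl (S.sol (n - 1)) := by
  rw [curRepl, repl_union] at hq
  rcases hq with hq | hq
  · exact hq
  · rcases mem_repl_vertPath.mp hq with rfl | ⟨-, h0, -⟩ <;> simp_all

lemma serv_mem_sq (h1 : 1 ≤ n) (hn : n ≤ S.N) :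
    S.v n - 5 * S.ρ n ≤ S.us n ∧ S.us n ≤ S.v n ∧ S.t n - 5 * S.ρ n ≤ S.ss n ∧ S.ss n ≤ S.t n :=
  (S.serv_mem n h1 hn).2

lemma mem_repl_sol_of_column (h1 : 1 ≤ n) (hn : n ≤ S.N) {s : ℕ} (hs : S.ss n ≤ s)
    (hs' : s ≤ S.t n + 4 * S.ρ n) : (S.us n, s) ∈ Repl (S.sol n) := by
  have hsq := S.serv_mem_sq h1 hn
  have hstep := S.step n h1 hn
  rcases hs.lt_or_eq with hs | rfl
  · refine repl_mono (F := vertPath (S.us n) (S.ss n) (S.t n) ∪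
        vertPath (S.us n) (S.t n) (S.t n + 4 * S.ρ n)) (by rw [hstep]; grind) ?_
    rw [repl_union, Set.mem_union, mem_repl_vertPath, mem_repl_vertPath]
    by_cases hst : s ≤ S.t n
    · exact Or.inl (Or.inr ⟨by omega, rfl, by simp only; omega, hst⟩)
    · exact Or.inr (Or.inr ⟨by omega, rfl, by simp only; omega, hs'⟩)
  · exact S.curRepl_subset_repl_sol h1 hn (S.serv_mem n h1 hn).1

lemma mem_repl_sol_of_row (h1 : 1 ≤ n) (hn : n ≤ S.N) {x : ℕ} (hx : S.us n ≤ x)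
    (hx' : x ≤ S.v n) : (x, S.t n) ∈ Repl (S.sol n) := by
  rcases hx.lt_or_eq with hx | rfl
  · refine repl_mono (F := horizPath (S.t n) (S.us n) (S.v n)) (by rw [S.step n h1 hn]; grind) ?_
    exact mem_repl_horizPath.mpr (Or.inr ⟨by omega, rfl, hx.le, hx'⟩)
  · exact S.mem_repl_sol_of_column h1 hn (S.serv_mem_sq h1 hn).2.2.2 (by omega)

lemma ρ_le_of_mem_repl_sol (hmn : m < n) (hn : n ≤ S.N) {x s : ℕ}
    (hq : (x, s) ∈ Repl (S.sol m)) (hx : x ≤ S.v n) (hs : s ≤ S.t n) :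
    S.ρ n ≤ max (S.v n - x) (S.t n - s) :=
  coe_le_distInf_iff.mp (S.rho_min n (by omega) hn _ (S.repl_sol_subset_curRepl hmn hn hq)) hx hs

lemma us_le_of_mem_repl_sol (hmn : m < n) (hn : n ≤ S.N) {x s : ℕ}
    (hq : (x, s) ∈ Repl (S.sol m)) (hsq : (x, s) ∈ SqRect (S.req n) (5 * S.ρ n)) : S.us n ≤ x :=
  S.serv_min n (by omega) hn _ (S.repl_sol_subset_curRepl hmn hn hq) hsq

lemma closest_spec (h1 : 1 ≤ n) (hn : n ≤ S.N) :
    S.u' n ≤ S.v n ∧ S.s' n ≤ S.t n ∧ max (S.v n - S.u' n) (S.t n - S.s' n) = S.ρ n :=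
  distInf_eq_coe_iff.mp (S.closest_dist n h1 hn)

lemma us_le_u' (h1 : 1 ≤ n) (hn : n ≤ S.N) : S.us n ≤ S.u' n := by
  obtain ⟨hu, hs, hmax⟩ := S.closest_spec h1 hn
  refine S.serv_min n h1 hn _ (S.closest_mem n h1 hn) ?_
  simp only [SqRect, Set.mem_ofPred_eq]
  omega

/-- The witness is the replica `(min (v n) (v m), t m)` on the SQ4 row of `m`. -/
lemma ρ_le_of_us_le_v (h1 : 1 ≤ m) (hmn : m < n) (hn : n ≤ S.N) (h : S.us m ≤ S.v n) :
    S.ρ n ≤ max (S.v n - S.v m) (S.t n - S.t m) := by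
  have hsq := S.serv_mem_sq h1 (by omega)
  have hrow := S.mem_repl_sol_of_row h1 (by omega) (le_min h hsq.2.1) (min_le_right _ _)
  have := S.ρ_le_of_mem_repl_sol hmn hn hrow (min_le_left _ _) (S.t_mono m n hmn.le hn)
  omega

lemma t_add_four_mul_ρ_add_ρ_le (h1 : 1 ≤ m) (hmn : m < n) (hn : n ≤ S.N) (h : S.us m ≤ S.v n)
    (h' : S.v n - S.us m < S.ρ n) : S.t m + 4 * S.ρ m + S.ρ n ≤ S.t n := by
  have hsq := S.serv_mem_sq h1 (by omega)
  have htmn := S.t_mono m n hmn.le hn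
  have hcol := S.mem_repl_sol_of_column h1 (by omega)
    (s := min (S.t n) (S.t m + 4 * S.ρ m)) (by omega) (min_le_right _ _)
  have := S.ρ_le_of_mem_repl_sol hmn hn hcol h (min_le_left _ _)
  omega

lemma v_lt_us_of_not_ballsEdgeDisjoint (h1 : 1 ≤ m) (hmn : m < n) (hn : n ≤ S.N)
    (h : ¬ BallsEdgeDisjoint (S.req m) (S.ρ m) (S.req n) (S.ρ n)) : S.v n < S.us m := by
  have hmn' := (sub_add_sub_lt_of_not_ballsEdgeDisjoint h).2
  simp only [req] at hmn'
  by_contra! hle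
  have := S.ρ_le_of_us_le_v h1 hmn hn hle
  omega

theorem repl_sol_induction {P : Replica → Prop} (hn : n ≤ S.N) (h0 : ∀ s, P (0, s))
    (hstep : ∀ m, 1 ≤ m → m ≤ n → (∀ q ∈ Repl (S.sol (m - 1)), P q) →
      (∀ s, S.ss m ≤ s → s ≤ S.t m + 4 * S.ρ m → P (S.us m, s)) ∧
      (∀ x, S.us m ≤ x → x ≤ S.v m → P (x, S.t m))) :
    ∀ q ∈ Repl (S.sol n), P q := by
  induction n with
  | zero =>
    intro q hq
    rw [S.sol_zero, mem_repl] at hq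
    rcases hq with rfl | ⟨_, he, -⟩
    exacts [h0 0, absurd he (Finset.notMem_empty _)]
  | succ n ih =>
    have IH := ih (by omega) fun m hm1 hmn => hstep m hm1 (by omega)
    obtain ⟨hcol, hrow⟩ := hstep (n + 1) (by omega) le_rfl IH
    rintro ⟨x, s⟩ hq
    rw [S.step (n + 1) (by omega) hn] at hq
    simp only [repl_union, Set.mem_union, mem_repl_vertPath, mem_repl_horizPath,
      Nat.add_sub_cancel, Prod.mk.injEq] at hq
    rcases hq with ((((hq | hq) | hq) | hq) | hq)
    · exact IH _ hq
    · rcases hq with ⟨rfl, -⟩ | ⟨-, rfl, -⟩ <;> exact h0 _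
    · rcases hq with ⟨rfl, rfl⟩ | ⟨-, rfl, hs, hs'⟩
      exacts [h0 0, hcol s hs (by omega)]
    · rcases hq with ⟨rfl, rfl⟩ | ⟨-, rfl, hx, hx'⟩
      exacts [h0 0, hrow x hx hx']
    · rcases hq with ⟨rfl, rfl⟩ | ⟨-, rfl, hs, hs'⟩
      exacts [h0 0, hcol s ((S.serv_mem_sq (by omega) hn).2.2.2.trans hs) hs']

/-- A replica of the strip inside `Sq(r_k, 5ρ(k))` would contradict the choice of `us k`, a later
SQ5 column inside the strip would come too close to `r_j`, and a later row crossing `v i` too close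
to `r_i`. -/
lemma add_five_mul_ρ_lt_t_of_mem_strip {i j k : ℕ} (hkj : k < j) (hji : j < i) (hiN : i ≤ S.N)
    (hvj : S.v j < S.us k) (hk : S.v k - S.v i < S.ρ k) (hj : S.v j - S.v i < S.ρ j)
    (hi : S.t i - S.t k < S.ρ i) (hgap : S.t j < S.t k + 4 * S.ρ k + S.ρ j) :
    ∀ q ∈ Repl (S.sol (j - 1)), S.v i < q.1 → q.1 ≤ S.v j → q.2 + 5 * S.ρ k < S.t k := by
  refine S.repl_sol_induction (by omega) (fun s h => absurd h (Nat.not_lt_zero _)) ?_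
  intro m hm1 hmj IH
  have hsqm := S.serv_mem_sq hm1 (by omega)
  rcases lt_trichotomy m k with hmk | rfl | hkm
  · have hsqk := S.serv_mem_sq (by omega : 1 ≤ k) (by omega)
    have htmk := S.t_mono m k hmk.le (by omega)
    have hfar : ∀ x s, (x, s) ∈ Repl (S.sol m) → s ≤ S.t k → S.v i < x → x ≤ S.v j →
        s + 5 * S.ρ k < S.t k := by
      intro x s hq hs hx hxj
      by_contra! hs'
      have := S.us_le_of_mem_repl_sol hmk (by omega) hq
        (by simp only [SqRect, req, Set.mem_ofPred_eq]; omega)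
      omega
    refine ⟨fun s hs hs' hx hxj => ?_,
      fun x hx hx' => hfar x _ (S.mem_repl_sol_of_row hm1 (by omega) hx hx') htmk⟩
    have := hfar _ _ (S.mem_repl_sol_of_column hm1 (by omega) (s := min s (S.t k)) (by omega)
      (by omega)) (min_le_right _ _) hx hxj
    omega
  · exact ⟨fun s _ _ _ hxj => absurd hxj (by omega), fun x hx _ _ hxj => absurd hxj (by omega)⟩
  · have htkm := S.t_mono k m hkm.le (by omega)
    have hsep : S.us m ≤ S.v i ∨ S.v j < S.us m := by
      by_contra! h
      have hserv := S.mem_repl_sol_pred (S.serv_mem m hm1 (by omega)).1 (by simp only; omega)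
      have hss := IH _ hserv h.1 h.2
      have := S.t_add_four_mul_ρ_add_ρ_le hm1 (by omega : m < j) (by omega) h.2 (by omega)
      omega
    refine ⟨fun s _ _ hx hxj => by simp only at hx hxj; omega, fun x hx hx' hxi hxj => ?_⟩
    rcases hsep with h | h
    · have := S.ρ_le_of_us_le_v hm1 (by omega : m < i) hiN h
      simp only at hxi
      omega
    · simp only at hxj
      omega

end SquareRun

/-- If `j` and `k` are children of an uncovered request `i` with `k < j`, then
`t_j − ρ(j) ≥ t_k + 4ρ(k)`. -/
theorem sibling_time_gap (S : SquareRun) (i j k : ℕ)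
    (hpj : S.IsParent i j) (hpk : S.IsParent i k) (hkj : k < j) :
    (S.t k : ℤ) + 4 * S.ρ k ≤ (S.t j : ℤ) - S.ρ j := by
  obtain ⟨hj1, hji, hiN, huncj, -, hovji, -⟩ := hpj
  obtain ⟨hk1, hki, -, -, -, hovki, hmink⟩ := hpk
  have hjN : j ≤ S.N := by omega
  have hvi_lt_usj := S.v_lt_us_of_not_ballsEdgeDisjoint hj1 hji hiN hovji
  have hvi_lt_usk := S.v_lt_us_of_not_ballsEdgeDisjoint hk1 hki hiN hovki
  have hball_ji := (sub_add_sub_lt_of_not_ballsEdgeDisjoint hovji).1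
  have hball_ki := sub_add_sub_lt_of_not_ballsEdgeDisjoint hovki
  simp only [SquareRun.req] at hball_ji hball_ki
  suffices S.t k + 4 * S.ρ k + S.ρ j ≤ S.t j by omega
  rcases le_or_gt (S.us k) (S.v j) with hle | hlt
  · exact S.t_add_four_mul_ρ_add_ρ_le hk1 hkj hjN hle (by omega)
  by_contra! hgap
  have hsqj := S.serv_mem_sq hj1 hjN
  have hsqk := S.serv_mem_sq hk1 (by omega)
  have hρj := add_le_of_ballsEdgeDisjoint (hmink j hkj hji huncj) (by omega) (by omega) (by omega)
    (S.t_mono k j hkj.le hjN)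
  obtain ⟨hu', hs', hmax⟩ := S.closest_spec hj1 hjN
  have hus := S.us_le_u' hj1 hjN
  have := S.add_five_mul_ρ_lt_t_of_mem_strip hkj hji hiN hlt (by omega) (by omega) (by omega)
    hgap _ (S.mem_repl_sol_pred (S.closest_mem j hj1 hjN) (by simp only; omega))
    (by simp only; omega) hu'
  simp only at this
  omega
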